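/- Let φ : ℍ → ℍ be holomorphic and suppose the function z ↦ φ(z) − λ⁻¹ z has nonnegative real part on ℍ for some λ > 0. Then the kernel K(z,w) = 1/(z + conj w) − λ⁻¹/(φ(z) + conj(φ(w))) is a positive kernel on ℍ. -/

import Mathlib

open Complex MeasureTheory Filter Topology Set

noncomputable section

/-- The open right half-plane. -/
def RHP : Set ℂ := {z : ℂ | 0 < z.re}

/-- The Szegő kernel of the right half-plane: `kern w z = k_w(z) = 1/(z + conj w)`. -/
def kern (w z : ℂ) : ℂ := 1 / (z + (starRingEnd ℂ) w)

/-- The mean of `|f|^2` on the vertical line `Re = x`. -/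
def hardyMean2 (f : ℂ → ℂ) (x : ℝ) : ℝ :=
  (1 / (2 * Real.pi)) * ∫ y : ℝ, ‖f (x + y * Complex.I)‖ ^ 2

/-- Membership in the Hardy space `H²(ℍ)` of the right half-plane. -/
def MemHardy2 (f : ℂ → ℂ) : Prop :=
  DifferentiableOn ℂ f RHP ∧ ∃ C : ℝ, ∀ x : ℝ, 0 < x → hardyMean2 f x ≤ C

/-- The squared `H²` norm, as the supremum of the vertical-line means. -/
def hardyNormSq (f : ℂ → ℂ) : ℝ :=
  sSup {m : ℝ | ∃ x : ℝ, 0 < x ∧ m = hardyMean2 f x}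

/-- `HardyInnerTendsto f g L` says the `H²(ℍ)` inner product `⟨f, g⟩` equals `L`,
realized as a limit of inner products over vertical lines `Re = x` as `x → 0⁺`. -/
def HardyInnerTendsto (f g : ℂ → ℂ) (L : ℂ) : Prop :=
  Tendsto (fun x : ℝ => ((1 / (2 * Real.pi) : ℝ) : ℂ) *
      ∫ y : ℝ, f (x + y * Complex.I) * (starRingEnd ℂ) (g (x + y * Complex.I)))
    (𝓝[>] (0 : ℝ)) (𝓝 L)

/-- The composition operator `C_φ : f ↦ f ∘ φ` is bounded on `H²(ℍ)` with bound `M`. -/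
def CompBoundedBy (φ : ℂ → ℂ) (M : ℝ) : Prop :=
  ∀ f : ℂ → ℂ, MemHardy2 f →
    MemHardy2 (f ∘ φ) ∧ hardyNormSq (f ∘ φ) ≤ M ^ 2 * hardyNormSq f

/-- The operator norm of the composition operator `C_φ` on `H²(ℍ)`. -/
def compNorm (φ : ℂ → ℂ) : ℝ :=
  sInf {M : ℝ | 0 ≤ M ∧ CompBoundedBy φ M}

/-- A kernel `K : X × X → ℂ` is positive if every finite Gram sum
`∑ᵢⱼ cᵢ conj(cⱼ) K(xᵢ,xⱼ)` is real and nonnegative. -/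
def IsPosKernel {X : Type*} (K : X → X → ℂ) : Prop :=
  ∀ (n : ℕ) (c : Fin n → ℂ) (x : Fin n → X),
    0 ≤ (∑ i, ∑ j, c i * (starRingEnd ℂ) (c j) * K (x i) (x j)).re ∧
    (∑ i, ∑ j, c i * (starRingEnd ℂ) (c j) * K (x i) (x j)).im = 0

/-!
With `ψ z = φ z - λ⁻¹ z` the kernel factors as
`(ψ z + conj (ψ w)) / (z + conj w) * (1 / (φ z + conj (φ w)))`. The second factor is the Szegő
kernel of `ℍ` pulled back by `φ`, so by the Schur product theorem it suffices that the Herglotz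
kernel `(ψ z + conj (ψ w)) / (z + conj w)` of a holomorphic `ψ` with `Re ψ ≥ 0` is positive
(the Szegő kernel is the case `ψ = 1/2`). On a disc `D(c, r)`, Cauchy's formula writes the Gram
sums of `(ψ z + conj (ψ w)) / (r² - (z - c) conj (w - c))` as
`π⁻¹ ∫ Re ψ(ζ) |∑ vᵢ / (ζ - xᵢ)|² dt` over the boundary circle. The discs `D(a, a - a⁻¹)`
exhaust `ℍ` as `a → ∞`, and `a` times their kernels tends to the Herglotz kernel of `ℍ`.
-/

open scoped ComplexOrder Real
open Matrix Metric

section PositiveKernel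

variable {X Y : Type*} {K L : X → X → ℂ}

lemma isPosKernel_iff_nonneg :
    IsPosKernel K ↔ ∀ (n : ℕ) (c : Fin n → ℂ) (x : Fin n → X),
      0 ≤ ∑ i, ∑ j, c i * (starRingEnd ℂ) (c j) * K (x i) (x j) := by
  simp only [IsPosKernel, Complex.nonneg_iff, eq_comm]

lemma Matrix.isHermitian_of_dotProduct_mulVec_nonneg {n : Type*} [Fintype n]
    {M : Matrix n n ℂ} (hM : ∀ v, 0 ≤ star v ⬝ᵥ M *ᵥ v) : M.IsHermitian := by
  classical
  rw [← isSymmetric_toEuclideanLin_iff, LinearMap.isSymmetric_iff_inner_map_self_real]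
  intro v
  have hreal := Complex.conj_eq_iff_im.2 (Complex.nonneg_iff.1 (hM v.ofLp)).2.symm
  rw [dotProduct_comm] at hreal
  simp only [toEuclideanLin, EuclideanSpace.inner_eq_star_dotProduct, ofLp_toLpLin, toLin'_apply]
  rw [dotProduct_star, Complex.star_def, hreal, hreal]

lemma sum_sum_mul_conj_eq_dotProduct {n : ℕ} (c : Fin n → ℂ) (x : Fin n → X) :
    ∑ i, ∑ j, c i * (starRingEnd ℂ) (c j) * K (x i) (x j) =
      star (star c) ⬝ᵥ (Matrix.of fun i j => K (x i) (x j)) *ᵥ star c := by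
  simp only [star_star, dotProduct, mulVec, Matrix.of_apply, Finset.mul_sum]
  refine Finset.sum_congr rfl fun i _ => Finset.sum_congr rfl fun j _ => ?_
  simp only [Pi.star_apply, Complex.star_def]
  ring

lemma isPosKernel_iff_posSemidef :
    IsPosKernel K ↔
      ∀ (n : ℕ) (x : Fin n → X), (Matrix.of fun i j => K (x i) (x j)).PosSemidef := by
  simp only [isPosKernel_iff_nonneg, sum_sum_mul_conj_eq_dotProduct]
  refine ⟨fun h n x => ?_, fun h n c x => (h n x).dotProduct_mulVec_nonneg _⟩
  have hM : ∀ v, 0 ≤ star v ⬝ᵥ (Matrix.of fun i j => K (x i) (x j)) *ᵥ v := fun v => by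
    simpa using h n (star v) x
  exact .of_dotProduct_mulVec_nonneg (isHermitian_of_dotProduct_mulVec_nonneg hM) hM

lemma IsPosKernel.mul (hK : IsPosKernel K) (hL : IsPosKernel L) :
    IsPosKernel fun z w => K z w * L z w :=
  isPosKernel_iff_posSemidef.2 fun n x =>
    (isPosKernel_iff_posSemidef.1 hK n x).hadamard (isPosKernel_iff_posSemidef.1 hL n x)

lemma IsPosKernel.comp (hK : IsPosKernel K) (f : Y → X) :
    IsPosKernel fun z w => K (f z) (f w) :=
  fun n c x => hK n c (f ∘ x)

lemma isPosKernel_of_tendsto {ι : Type*} {l : Filter ι} [l.NeBot] {F : ι → X → X → ℂ}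
    (hlim : ∀ z w, Tendsto (fun a => F a z w) l (𝓝 (K z w)))
    (hpos : ∀ (n : ℕ) (c : Fin n → ℂ) (x : Fin n → X),
      ∀ᶠ a in l, 0 ≤ ∑ i, ∑ j, c i * (starRingEnd ℂ) (c j) * F a (x i) (x j)) :
    IsPosKernel K :=
  isPosKernel_iff_nonneg.2 fun n c x => ge_of_tendsto
    (tendsto_finsetSum _ fun _ _ => tendsto_finsetSum _ fun _ _ => (hlim _ _).const_mul _)
    (hpos n c x)

end PositiveKernel

section Disk

variable {ψ : ℂ → ℂ} {c : ℂ} {r : ℝ}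

lemma sq_sub_mul_ne_zero {a b : ℂ} (ha : ‖a‖ < r) (hb : ‖b‖ ≤ r) : (r : ℂ) ^ 2 - a * b ≠ 0 := by
  intro h
  have hnorm := congrArg norm (sub_eq_zero.1 h)
  rw [norm_pow, Complex.norm_real, Real.norm_eq_abs, sq_abs, norm_mul] at hnorm
  nlinarith [norm_nonneg a, norm_nonneg b]

lemma continuous_div_mul_conj_circleMap (hψ : ContinuousOn ψ (closedBall c r)) {α β : ℂ}
    (hα : α ∈ ball c r) (hβ : β ∈ ball c r) :
    Continuous fun t => ψ (circleMap c r t) /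
      ((circleMap c r t - α) * (starRingEnd ℂ) (circleMap c r t - β)) := by
  refine (hψ.comp_continuous (continuous_circleMap c r)
    (circleMap_mem_closedBall c (pos_of_mem_ball hα).le)).div (by fun_prop) fun t => ?_
  exact mul_ne_zero (sub_ne_zero.2 (circleMap_ne_mem_ball hα t))
    ((map_ne_zero _).2 (sub_ne_zero.2 (circleMap_ne_mem_ball hβ t)))

/-- Cauchy's formula for `ψ ζ / (r ^ 2 - conj (β - c) * (ζ - c))`: on the circle this
denominator is `(ζ - c) * conj (ζ - β)`. -/
lemma integral_div_mul_conj_circleMap (hψ : DifferentiableOn ℂ ψ (closedBall c r)) {α β : ℂ}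
    (hα : α ∈ ball c r) (hβ : β ∈ ball c r) :
    ∫ t in (0)..2 * π, ψ (circleMap c r t) /
        ((circleMap c r t - α) * (starRingEnd ℂ) (circleMap c r t - β)) =
      2 * π * ψ α / (r ^ 2 - (α - c) * (starRingEnd ℂ) (β - c)) := by
  have hβr : ‖(starRingEnd ℂ) (β - c)‖ < r := by simpa [← dist_eq_norm] using hβ
  have hf : DifferentiableOn ℂ (fun ζ => ψ ζ / (r ^ 2 - (starRingEnd ℂ) (β - c) * (ζ - c)))
      (closedBall c r) :=
    hψ.div (by fun_prop) fun ζ hζ =>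
      sq_sub_mul_ne_zero hβr (by simpa [← dist_eq_norm] using hζ)
  have hcauchy := hf.circleIntegral_sub_inv_smul hα
  have hintegrand : ∀ t, deriv (circleMap c r) t • ((circleMap c r t - α)⁻¹ •
      (ψ (circleMap c r t) / (r ^ 2 - (starRingEnd ℂ) (β - c) * (circleMap c r t - c)))) =
      I * (ψ (circleMap c r t) /
        ((circleMap c r t - α) * (starRingEnd ℂ) (circleMap c r t - β))) := by
    intro t
    rw [deriv_circleMap]
    set u := circleMap 0 r t
    have hu : circleMap c r t = c + u := by simp [u, circleMap]
    have hr : u * (starRingEnd ℂ) u = r ^ 2 := by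
      rw [Complex.mul_conj, Complex.normSq_eq_norm_sq, norm_circleMap_zero, sq_abs]
      push_cast; rfl
    have hu0 : u ≠ 0 := circleMap_ne_center (pos_of_mem_ball hα).ne'
    have hden :
        (r : ℂ) ^ 2 - (starRingEnd ℂ) (β - c) * u = u * (starRingEnd ℂ) (c + u - β) := by
      rw [← hr]; simp only [map_sub, map_add]; ring
    rw [hu, add_sub_cancel_left, hden, smul_eq_mul, smul_eq_mul]
    field_simp
  simp only [circleIntegral, hintegrand, intervalIntegral.integral_const_mul] at hcauchy
  refine mul_left_cancel₀ I_ne_zero ?_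
  rw [hcauchy, smul_eq_mul, mul_comm (α - c)]
  ring

lemma re_sum_sum_mul_div_eq_integral (hψ : DifferentiableOn ℂ ψ (closedBall c r)) {n : ℕ}
    (v : Fin n → ℂ) (x : Fin n → ℂ) (hx : ∀ i, x i ∈ ball c r) :
    (∑ i, ∑ j, v i * (starRingEnd ℂ) (v j) *
        (ψ (x i) / (r ^ 2 - (x i - c) * (starRingEnd ℂ) (x j - c)))).re =
      (2 * π)⁻¹ * ∫ t in (0)..2 * π,
        (ψ (circleMap c r t)).re * Complex.normSq (∑ i, v i / (circleMap c r t - x i)) := by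
  set F : ℝ → ℂ := fun t => ∑ i, ∑ j, v i * (starRingEnd ℂ) (v j) *
    (ψ (circleMap c r t) / ((circleMap c r t - x i) * (starRingEnd ℂ) (circleMap c r t - x j)))
  have hcont : ∀ i j, Continuous fun t => v i * (starRingEnd ℂ) (v j) *
      (ψ (circleMap c r t) /
        ((circleMap c r t - x i) * (starRingEnd ℂ) (circleMap c r t - x j))) :=
    fun i j => continuous_const.mul
      (continuous_div_mul_conj_circleMap hψ.continuousOn (hx i) (hx j))
  have hsum : ∑ i, ∑ j, v i * (starRingEnd ℂ) (v j) *
      (ψ (x i) / (r ^ 2 - (x i - c) * (starRingEnd ℂ) (x j - c))) =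
      ((2 * π)⁻¹ : ℝ) * ∫ t in (0)..2 * π, F t := by
    rw [intervalIntegral.integral_finsetSum fun i _ =>
      (continuous_finsetSum _ fun j _ => hcont i j).intervalIntegrable _ _, Finset.mul_sum]
    refine Finset.sum_congr rfl fun i _ => ?_
    rw [intervalIntegral.integral_finsetSum fun j _ => (hcont i j).intervalIntegrable _ _,
      Finset.mul_sum]
    refine Finset.sum_congr rfl fun j _ => ?_
    rw [intervalIntegral.integral_const_mul, integral_div_mul_conj_circleMap hψ (hx i) (hx j)]
    push_cast
    field_simp
  have hF : ∀ t, (F t).re =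
      (ψ (circleMap c r t)).re * Complex.normSq (∑ i, v i / (circleMap c r t - x i)) := by
    intro t
    rw [← Complex.re_mul_ofReal, ← Complex.mul_conj, map_sum, Finset.sum_mul_sum,
      Finset.mul_sum]
    simp only [F, Finset.mul_sum, div_eq_mul_inv, mul_inv, map_mul, map_inv₀]
    congr 1
    refine Finset.sum_congr rfl fun i _ => Finset.sum_congr rfl fun j _ => ?_
    ring
  have hFint : IntervalIntegrable F volume 0 (2 * π) :=
    (continuous_finsetSum _ fun i _ =>
      continuous_finsetSum _ fun j _ => hcont i j).intervalIntegrable _ _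
  rw [hsum, Complex.re_ofReal_mul, ← Complex.reCLM_apply,
    ← Complex.reCLM.intervalIntegral_comp_comm hFint]
  simp only [Complex.reCLM_apply, hF]

lemma herglotz_disk_gram_nonneg (hψ : DifferentiableOn ℂ ψ (closedBall c r))
    (hre : ∀ t, 0 ≤ (ψ (circleMap c r t)).re) {n : ℕ} (v : Fin n → ℂ) (x : Fin n → ℂ)
    (hx : ∀ i, x i ∈ ball c r) :
    0 ≤ ∑ i, ∑ j, v i * (starRingEnd ℂ) (v j) * ((ψ (x i) + (starRingEnd ℂ) (ψ (x j))) /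
      (r ^ 2 - (x i - c) * (starRingEnd ℂ) (x j - c))) := by
  set S := ∑ i, ∑ j, v i * (starRingEnd ℂ) (v j) *
      (ψ (x i) / (r ^ 2 - (x i - c) * (starRingEnd ℂ) (x j - c)))
  have hconj : (starRingEnd ℂ) S = ∑ i, ∑ j, v i * (starRingEnd ℂ) (v j) *
      ((starRingEnd ℂ) (ψ (x j)) / (r ^ 2 - (x i - c) * (starRingEnd ℂ) (x j - c))) := by
    simp only [S, map_sum, map_mul, map_div₀, Complex.conj_conj, map_sub, map_pow,
      Complex.conj_ofReal]
    rw [Finset.sum_comm]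
    refine Finset.sum_congr rfl fun i _ => Finset.sum_congr rfl fun j _ => ?_
    ring
  have hsplit : ∑ i, ∑ j, v i * (starRingEnd ℂ) (v j) *
      ((ψ (x i) + (starRingEnd ℂ) (ψ (x j))) / (r ^ 2 - (x i - c) * (starRingEnd ℂ) (x j - c))) =
      S + (starRingEnd ℂ) S := by
    rw [hconj, ← Finset.sum_add_distrib]
    refine Finset.sum_congr rfl fun i _ => ?_
    rw [← Finset.sum_add_distrib]
    refine Finset.sum_congr rfl fun j _ => ?_
    ring
  have hSre : 0 ≤ S.re := by
    rw [re_sum_sum_mul_div_eq_integral hψ v x hx]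
    exact mul_nonneg (by positivity) (intervalIntegral.integral_nonneg (by positivity)
      fun t _ => mul_nonneg (hre t) (Complex.normSq_nonneg _))
  rw [hsplit, Complex.add_conj]
  exact Complex.zero_le_real.2 (by positivity)

end Disk

section HalfPlane

lemma add_conj_ne_zero_of_mem_RHP {z w : ℂ} (hz : z ∈ RHP) (hw : w ∈ RHP) :
    z + (starRingEnd ℂ) w ≠ 0 := by
  have hre : 0 < (z + (starRingEnd ℂ) w).re := by
    rw [Complex.add_re, Complex.conj_re]
    exact add_pos hz hw
  exact fun h => by simp [h] at hre

lemma closedBall_subset_RHP {a : ℝ} (ha : 0 < a) : closedBall (a : ℂ) (a - a⁻¹) ⊆ RHP := by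
  intro ζ hζ
  have hre : a - ζ.re ≤ a - a⁻¹ := by
    refine le_trans ?_ (mem_closedBall.1 hζ)
    rw [dist_comm, Complex.dist_eq]
    simpa using Complex.re_le_norm ((a : ℂ) - ζ)
  show 0 < ζ.re
  linarith [inv_pos.2 ha]

lemma eventually_mem_ball_of_mem_RHP {z : ℂ} (hz : z ∈ RHP) :
    ∀ᶠ a : ℝ in atTop, z ∈ ball (a : ℂ) (a - a⁻¹) := by
  have hz : 0 < z.re := hz
  filter_upwards [eventually_ge_atTop 1,
    eventually_ge_atTop ((Complex.normSq z + 2) / (2 * z.re))] with a ha hza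
  have ha0 : 0 < a := zero_lt_one.trans_le ha
  have hr : 0 ≤ a - a⁻¹ := sub_nonneg.2 (inv_le_one_of_one_le₀ ha |>.trans ha)
  rw [div_le_iff₀ (by positivity), Complex.normSq_apply] at hza
  rw [mem_ball, Complex.dist_eq, ← sq_lt_sq₀ (norm_nonneg _) hr, Complex.sq_norm,
    Complex.normSq_apply]
  simp only [Complex.sub_re, Complex.ofReal_re, Complex.sub_im, Complex.ofReal_im, sub_zero]
  nlinarith [inv_pos.2 ha0, mul_inv_cancel₀ ha0.ne']

lemma tendsto_mul_div_disk {z w : ℂ} (hzw : z + (starRingEnd ℂ) w ≠ 0) :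
    Tendsto (fun a : ℝ => (a : ℂ) /
        (((a - a⁻¹ : ℝ) : ℂ) ^ 2 - (z - a) * (starRingEnd ℂ) (w - a)))
      atTop (𝓝 (1 / (z + (starRingEnd ℂ) w))) := by
  -- with `ε = a⁻¹`, the denominator is `a * (z + conj w - (2 + z * conj w) * ε + ε ^ 3)`
  set g : ℂ → ℂ := fun ε => 1 / (z + (starRingEnd ℂ) w - (2 + z * (starRingEnd ℂ) w) * ε + ε ^ 3)
  have hg : Tendsto g (𝓝 0) (𝓝 (1 / (z + (starRingEnd ℂ) w))) := by
    have : ContinuousAt g 0 :=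
      ContinuousAt.div continuousAt_const (by fun_prop) (by simpa using hzw)
    simpa [g] using this.tendsto
  have hinv : Tendsto (fun a : ℝ => ((a : ℂ))⁻¹) atTop (𝓝 0) := by
    simpa [Function.comp_def] using
      (Complex.continuous_ofReal.tendsto 0).comp tendsto_inv_atTop_zero
  refine (hg.comp hinv).congr' ?_
  filter_upwards [eventually_gt_atTop 0] with a ha
  have ha : (a : ℂ) ≠ 0 := Complex.ofReal_ne_zero.2 ha.ne'
  simp only [g, Function.comp_apply, map_sub, Complex.conj_ofReal]
  push_cast
  field_simp
  ring

theorem isPosKernel_herglotz {ψ : ℂ → ℂ} (hψ : DifferentiableOn ℂ ψ RHP)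
    (hre : ∀ z ∈ RHP, 0 ≤ (ψ z).re) :
    IsPosKernel fun z w : RHP =>
      (ψ z + (starRingEnd ℂ) (ψ w)) / (z + (starRingEnd ℂ) (w : ℂ)) := by
  refine isPosKernel_of_tendsto (l := atTop) (F := fun (a : ℝ) (z w : RHP) =>
      (a : ℂ) * ((ψ z + (starRingEnd ℂ) (ψ w)) /
        (((a - a⁻¹ : ℝ) : ℂ) ^ 2 - (z - a) * (starRingEnd ℂ) (w - a))))
    (fun z w => ?_) (fun n c x => ?_)
  · have := (tendsto_mul_div_disk (add_conj_ne_zero_of_mem_RHP z.2 w.2)).mul_const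
      (ψ z + (starRingEnd ℂ) (ψ w))
    rw [one_div_mul_eq_div] at this
    exact this.congr fun a => by ring
  · filter_upwards [eventually_ge_atTop 1,
      eventually_all.2 fun i => eventually_mem_ball_of_mem_RHP (x i).2] with a ha hx
    have hsub := closedBall_subset_RHP (zero_lt_one.trans_le ha)
    have hr : 0 ≤ a - a⁻¹ := sub_nonneg.2 (inv_le_one_of_one_le₀ ha |>.trans ha)
    have hdisk := herglotz_disk_gram_nonneg (hψ.mono hsub)
      (fun t => hre _ (hsub (circleMap_mem_closedBall _ hr t))) c (fun i => x i) hx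
    simp only [mul_left_comm _ (a : ℂ), ← Finset.mul_sum]
    exact mul_nonneg (Complex.zero_le_real.2 (by linarith)) hdisk

theorem isPosKernel_one_div_add_conj :
    IsPosKernel fun z w : RHP => 1 / (z + (starRingEnd ℂ) (w : ℂ)) := by
  convert isPosKernel_herglotz (ψ := fun _ => 1 / 2) (differentiableOn_const _)
    (fun _ _ => by norm_num) using 3
  simp only [map_div₀, map_one, map_ofNat]
  norm_num

end HalfPlane

lemma one_div_sub_inv_div_eq {lam : ℝ} {z w p q : ℂ} (hzw : z + (starRingEnd ℂ) w ≠ 0)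
    (hpq : p + (starRingEnd ℂ) q ≠ 0) :
    1 / (z + (starRingEnd ℂ) w) - (lam : ℂ)⁻¹ / (p + (starRingEnd ℂ) q) =
      (p - (lam : ℂ)⁻¹ * z + (starRingEnd ℂ) (q - (lam : ℂ)⁻¹ * w)) / (z + (starRingEnd ℂ) w) *
        (1 / (p + (starRingEnd ℂ) q)) := by
  simp only [map_sub, map_mul, map_inv₀, Complex.conj_ofReal]
  field_simp
  ring

theorem kernel_difference_pos_general (φ : ℂ → ℂ) (hmaps : MapsTo φ RHP RHP)
    (hol : DifferentiableOn ℂ φ RHP) (lam : ℝ)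
    (h : ∀ z ∈ RHP, 0 ≤ (φ z - ((lam : ℂ))⁻¹ * z).re) :
    IsPosKernel (fun z w : RHP =>
      1 / ((z : ℂ) + (starRingEnd ℂ) (w : ℂ)) -
        ((lam : ℂ))⁻¹ / (φ z + (starRingEnd ℂ) (φ w))) := by
  have hherglotz := isPosKernel_herglotz (hol.sub (differentiableOn_id.const_mul _)) h
  have hszego := isPosKernel_one_div_add_conj.comp (hmaps.restrict φ RHP RHP)
  convert hherglotz.mul hszego using 3 with z w
  exact one_div_sub_inv_div_eq (add_conj_ne_zero_of_mem_RHP z.2 w.2)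
    (add_conj_ne_zero_of_mem_RHP (hmaps z.2) (hmaps w.2))

/-- If `φ(z) - λ⁻¹ z` has nonnegative real part on `ℍ` for some `λ > 0`, then
`1/(z + conj w) - λ⁻¹/(φ(z) + conj φ(w))` is a positive kernel on `ℍ`. -/
theorem kernel_difference_pos (φ : ℂ → ℂ) (hmaps : MapsTo φ RHP RHP)
    (hol : DifferentiableOn ℂ φ RHP) (lam : ℝ) (hlam : 0 < lam)
    (h : ∀ z ∈ RHP, 0 ≤ (φ z - ((lam : ℂ))⁻¹ * z).re) :
    IsPosKernel (fun z w : RHP =>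
      1 / ((z : ℂ) + (starRingEnd ℂ) (w : ℂ)) -
        ((lam : ℂ))⁻¹ / (φ z + (starRingEnd ℂ) (φ w))) :=
  kernel_difference_pos_general φ hmaps hol lam h

end
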